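/- Let f be normalized monotone submodular on Z, G = {g₁,...,g_m} with prefixes G^t, and suppose nonnegative nonincreasing thresholds τ₁ ≥ ... ≥ τ_m satisfy f(g_t | G^{t−1}) ≥ τ_t for all t. Let C₁,...,C_m be disjoint subsets of Z \ G with ∑_{i=1}^t |C_i| ≤ P·t for all t and f(j | G) ≤ (1+δ)τ_t for all j ∈ C_t. Then ∑_{t=1}^m ∑_{j∈C_t} f(j|G) ≤ (1+δ)·P·f(G). -/

import Mathlib

open Finset

/-- `f` is submodular on ground set `Z` (diminishing marginal gains). -/
def IsSubmodularOn {α : Type*} [DecidableEq α] (Z : Finset α) (f : Finset α → ℝ) : Prop :=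
  ∀ S T : Finset α, S ⊆ T → T ⊆ Z → ∀ z ∈ Z, z ∉ T →
    f (insert z T) - f T ≤ f (insert z S) - f S

/-- `f` is monotone on subsets of `Z`. -/
def IsMonotoneOn {α : Type*} [DecidableEq α] (Z : Finset α) (f : Finset α → ℝ) : Prop :=
  ∀ S T : Finset α, S ⊆ T → T ⊆ Z → f S ≤ f T

/-- The prefix `G^t = {g₁, …, g_t}` of the greedy solution listed in order. -/
noncomputable def greedyPrefix {α : Type*} [DecidableEq α] {m : ℕ}
    (g : Fin m → α) (t : ℕ) : Finset α :=
  (Finset.univ.filter (fun i : Fin m => (i : ℕ) < t)).image g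

/-!
Telescoping along the greedy order gives `f G = ∑ₜ f(gₜ | Gᵗ⁻¹) ≥ ∑ₜ τₜ`, while each `j ∈ Cₜ`
contributes at most `(1 + δ) τₜ`. Abel summation against the nonincreasing, nonnegative `τ`
turns the prefix bound `∑_{i ≤ t} |Cᵢ| ≤ P t` into `∑ₜ |Cₜ| τₜ ≤ P ∑ₜ τₜ`.
-/

theorem sum_mul_le_mul_sum_of_sum_range_le {R : Type*} [CommRing R] [LinearOrder R]
    [IsOrderedRing R] {n : ℕ} {τ a : ℕ → R} {P : R} (hτ : AntitoneOn τ (Set.Iio n))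
    (hτ0 : ∀ i < n, 0 ≤ τ i) (ha : ∀ t ≤ n, ∑ i ∈ range t, a i ≤ P * t) :
    ∑ i ∈ range n, τ i * a i ≤ P * ∑ i ∈ range n, τ i := by
  rcases Nat.eq_zero_or_pos n with rfl | hn
  · simp
  have habel := sum_range_by_parts τ a n
  have hconst := sum_range_by_parts τ (fun _ => P) n
  simp only [smul_eq_mul, sum_const, card_range, nsmul_eq_mul] at habel hconst
  rw [habel, mul_comm P, sum_mul, hconst]
  -- after summation by parts the increments `τ (i + 1) - τ i` are `≤ 0`,
  -- so the prefix bounds compare termwise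
  have hprefix : ∀ t ≤ n, ∑ i ∈ range t, a i ≤ t * P := fun t ht =>
    (ha t ht).trans_eq (mul_comm _ _)
  refine sub_le_sub (mul_le_mul_of_nonneg_left (hprefix n le_rfl) (hτ0 _ (by omega)))
    (sum_le_sum fun i hi => mul_le_mul_of_nonpos_left (hprefix _ (by grind)) ?_)
  exact sub_nonpos.2 (hτ (by grind) (by grind) i.le_succ)

section
variable {α : Type*} [DecidableEq α] {m : ℕ}

theorem greedyPrefix_zero (g : Fin m → α) : greedyPrefix g 0 = ∅ := by
  simp [greedyPrefix]

theorem greedyPrefix_succ (g : Fin m → α) (i : Fin m) :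
    greedyPrefix g (i + 1) = insert (g i) (greedyPrefix g i) := by
  ext x
  simp only [greedyPrefix, mem_image, mem_filter, mem_univ, true_and, mem_insert,
    Nat.lt_succ_iff_lt_or_eq, or_and_right, exists_or, ← Fin.ext_iff, exists_eq_left]
  rw [or_comm, @eq_comm _ (g i)]

theorem sum_marginal_greedyPrefix {M : Type*} [AddCommGroup M] (f : Finset α → M) (g : Fin m → α) :
    ∑ i, (f (insert (g i) (greedyPrefix g i)) - f (greedyPrefix g i)) =
      f (greedyPrefix g m) - f ∅ := by
  simp_rw [← greedyPrefix_succ]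
  rw [Fin.sum_univ_eq_sum_range (fun n => f (greedyPrefix g (n + 1)) - f (greedyPrefix g n)),
    sum_range_sub (fun n => f (greedyPrefix g n)), greedyPrefix_zero]
end

theorem Fin.sum_filter_val_lt_eq_sum_range_extend {M : Type*} [AddCommMonoid M] {m t : ℕ}
    (ht : t ≤ m) (F : Fin m → M) :
    ∑ i ∈ univ.filter (fun i : Fin m => (i : ℕ) < t), F i =
      ∑ n ∈ range t, Function.extend Fin.val F 0 n := by
  have hrange : (univ.filter fun i : Fin m => (i : ℕ) < t).map Fin.valEmbedding = range t := by
    ext n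
    simp only [mem_map, mem_filter, mem_univ, true_and, Fin.valEmbedding_apply, mem_range]
    exact ⟨fun ⟨i, hi, e⟩ => e ▸ hi, fun hn => ⟨⟨n, by omega⟩, hn, rfl⟩⟩
  rw [← hrange, sum_map]
  exact sum_congr rfl fun i _ => (Fin.val_injective.extend_apply F 0 i).symm

theorem Fin.sum_mul_le_mul_sum_of_sum_filter_le {R : Type*} [CommRing R] [LinearOrder R]
    [IsOrderedRing R] {m : ℕ} {τ a : Fin m → R} {P : R} (hτ : Antitone τ) (hτ0 : ∀ i, 0 ≤ τ i)
    (ha : ∀ t ≤ m, ∑ i ∈ univ.filter (fun i : Fin m => (i : ℕ) < t), a i ≤ P * t) :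
    ∑ i, τ i * a i ≤ P * ∑ i, τ i := by
  have hfull : (univ.filter fun i : Fin m => (i : ℕ) < m) = univ :=
    filter_true_of_mem fun i _ => i.isLt
  have hextend : ∀ n (hn : n < m) (F : Fin m → R), Function.extend Fin.val F 0 n = F ⟨n, hn⟩ :=
    fun n hn F => Fin.val_injective.extend_apply F 0 ⟨n, hn⟩
  rw [← hfull, Fin.sum_filter_val_lt_eq_sum_range_extend le_rfl,
    Fin.sum_filter_val_lt_eq_sum_range_extend le_rfl]
  calc ∑ n ∈ range m, Function.extend Fin.val (fun i => τ i * a i) 0 n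
      = ∑ n ∈ range m, Function.extend Fin.val τ 0 n * Function.extend Fin.val a 0 n :=
        sum_congr rfl fun n hn => by simp only [hextend n (mem_range.1 hn)]
    _ ≤ P * ∑ n ∈ range m, Function.extend Fin.val τ 0 n := by
        refine sum_mul_le_mul_sum_of_sum_range_le (fun i hi j hj hij => ?_)
          (fun i hi => ?_) (fun t ht => ?_)
        · rw [hextend i hi, hextend j hj]
          exact hτ (Fin.mk_le_mk.2 hij)
        · rw [hextend i hi]
          exact hτ0 _
        · rw [← Fin.sum_filter_val_lt_eq_sum_range_extend ht]
          exact ha t ht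

theorem stmt_18_general {α : Type*} [DecidableEq α] (f : Finset α → ℝ)
    (hnorm : f ∅ = 0)
    (P : ℕ) (δ : ℝ) (hδ : 0 ≤ δ)
    (m : ℕ) (g : Fin m → α)
    (G : Finset α) (hGdef : G = greedyPrefix g m)
    (τ : Fin m → ℝ) (hτ0 : ∀ i, 0 ≤ τ i)
    (hτmono : ∀ i j : Fin m, i ≤ j → τ j ≤ τ i)
    -- `f(g_t | G^{t-1}) ≥ τ_t` (with `t = i+1`)
    (hgain : ∀ i : Fin m,
      f (insert (g i) (greedyPrefix g i)) - f (greedyPrefix g i) ≥ τ i)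
    (C : Fin m → Finset α)
    -- prefix-size bound `∑_{i=1}^t |C_i| ≤ P·t`
    (hCsize : ∀ t : ℕ, t ≤ m →
      ∑ i ∈ Finset.univ.filter (fun i : Fin m => (i : ℕ) < t), (C i).card ≤ P * t)
    -- `f(j | G) ≤ (1+δ)τ_t` for all `j ∈ C_t`
    (hCgain : ∀ i : Fin m, ∀ j ∈ C i,
      f (insert j G) - f G ≤ (1 + δ) * τ i) :
    ∑ i : Fin m, ∑ j ∈ C i, (f (insert j G) - f G) ≤ (1 + δ) * P * f G := by
  subst hGdef
  calc ∑ i, ∑ j ∈ C i, (f (insert j (greedyPrefix g m)) - f (greedyPrefix g m))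
      ≤ ∑ i, ((C i).card : ℝ) * ((1 + δ) * τ i) := sum_le_sum fun i _ => by
        simpa only [nsmul_eq_mul] using sum_le_card_nsmul _ _ _ (hCgain i)
    _ = (1 + δ) * ∑ i, τ i * (C i).card := by
        rw [mul_sum]
        exact sum_congr rfl fun i _ => by ring
    _ ≤ (1 + δ) * (P * ∑ i, τ i) := by
        gcongr
        refine Fin.sum_mul_le_mul_sum_of_sum_filter_le (fun i j h => hτmono i j h) hτ0
          fun t ht => ?_
        exact_mod_cast hCsize t ht
    _ ≤ (1 + δ) * (P * f (greedyPrefix g m)) := by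
        gcongr
        rw [← sub_zero (f _), ← hnorm, ← sum_marginal_greedyPrefix]
        exact sum_le_sum fun i _ => hgain i
    _ = (1 + δ) * P * f (greedyPrefix g m) := by ring

theorem stmt_18 {α : Type*} [DecidableEq α] (Z : Finset α) (f : Finset α → ℝ)
    (hnorm : f ∅ = 0) (hmono : IsMonotoneOn Z f) (hsub : IsSubmodularOn Z f)
    (P : ℕ) (hP : 0 < P) (δ : ℝ) (hδ : 0 ≤ δ)
    (m : ℕ) (g : Fin m → α) (hginj : Function.Injective g)
    (G : Finset α) (hGdef : G = greedyPrefix g m) (hG : G ⊆ Z)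
    (τ : Fin m → ℝ) (hτ0 : ∀ i, 0 ≤ τ i)
    (hτmono : ∀ i j : Fin m, i ≤ j → τ j ≤ τ i)
    -- `f(g_t | G^{t-1}) ≥ τ_t` (with `t = i+1`)
    (hgain : ∀ i : Fin m,
      f (insert (g i) (greedyPrefix g i)) - f (greedyPrefix g i) ≥ τ i)
    (C : Fin m → Finset α)
    (hCdisj : ∀ i j : Fin m, i ≠ j → Disjoint (C i) (C j))
    (hCsub : ∀ i, C i ⊆ Z \ G)
    -- prefix-size bound `∑_{i=1}^t |C_i| ≤ P·t`
    (hCsize : ∀ t : ℕ, t ≤ m →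
      ∑ i ∈ Finset.univ.filter (fun i : Fin m => (i : ℕ) < t), (C i).card ≤ P * t)
    -- `f(j | G) ≤ (1+δ)τ_t` for all `j ∈ C_t`
    (hCgain : ∀ i : Fin m, ∀ j ∈ C i,
      f (insert j G) - f G ≤ (1 + δ) * τ i) :
    ∑ i : Fin m, ∑ j ∈ C i, (f (insert j G) - f G) ≤ (1 + δ) * P * f G :=
  stmt_18_general f hnorm P δ hδ m g G hGdef τ hτ0 hτmono hgain C hCsize hCgain
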